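/- arXiv:math/0211019 — 2 statements merged into one kernel-verified Lean document; each statement's English description precedes it below -/
import Mathlib

section
/- Let n ≥ 3 and let B_n be the braid group on n strands. Let G be the subgroup of B_n generated by the elements σ_{j+1} σ_j σ_{j+1}^{-1} for 1 ≤ j ≤ n−2 together with the squares σ_j^2 for 1 ≤ j ≤ n−1. Then for every element W of B_n and every i with 1 ≤ i ≤ n−1, the conjugate W σ_i^2 W^{-1} belongs to G; equivalently, the normal closure of {σ_1^2, …, σ_{n−1}^2} in B_n is contained in G. -/
namespace Paper

/-- The braid relations on `n` strands: `σ_i σ_{i+1} σ_i = σ_{i+1} σ_i σ_{i+1}`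
for adjacent indices, and `σ_i σ_j = σ_j σ_i` when `|i - j| ≥ 2`.
Generators are indexed by `Fin (n - 1)` (index `i` corresponds to `σ_{i+1}`
in the usual `1`-based notation). -/
def braidRels (n : ℕ) : Set (FreeGroup (Fin (n - 1))) :=
  {r | (∃ i j : Fin (n - 1), (i : ℕ) + 1 = (j : ℕ) ∧
          r = FreeGroup.of i * FreeGroup.of j * FreeGroup.of i *
              (FreeGroup.of j * FreeGroup.of i * FreeGroup.of j)⁻¹) ∨
       (∃ i j : Fin (n - 1), (i : ℕ) + 2 ≤ (j : ℕ) ∧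
          r = FreeGroup.of i * FreeGroup.of j *
              (FreeGroup.of j * FreeGroup.of i)⁻¹)}

/-- The braid group `B_n` on `n` strands, presented by the braid relations. -/
abbrev BraidGroup (n : ℕ) := PresentedGroup (braidRels n)

/-- The standard generator `σ` of the braid group. -/
def σ {n : ℕ} (i : Fin (n - 1)) : BraidGroup n := PresentedGroup.of i

namespace BraidProof

/-! ### Generic consequences of a braid relation in a group -/

section BraidCalc

variable {G : Type*} [Group G] {a b : G}

theorem br1 (H : a * b * a = b * a * b) : a * b * a⁻¹ = b⁻¹ * a * b := by
  calc a * b * a⁻¹ = b⁻¹ * (b * a * b) * a⁻¹ := by group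
    _ = b⁻¹ * (a * b * a) * a⁻¹ := by rw [H]
    _ = b⁻¹ * a * b := by group

theorem br2 (H : a * b * a = b * a * b) : b * a * b⁻¹ = a⁻¹ * b * a := by
  calc b * a * b⁻¹ = a⁻¹ * (a * b * a) * b⁻¹ := by group
    _ = a⁻¹ * (b * a * b) * b⁻¹ := by rw [H]
    _ = a⁻¹ * b * a := by group

theorem br3 (H : a * b * a = b * a * b) : a * (b * b) * a⁻¹ = b⁻¹ * (a * a) * b := by
  calc a * (b * b) * a⁻¹ = (a * b * a⁻¹) * (a * b * a⁻¹) := by group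
    _ = (b⁻¹ * a * b) * (b⁻¹ * a * b) := by rw [br1 H]
    _ = b⁻¹ * (a * a) * b := by group

theorem br4 (H : a * b * a = b * a * b) : a⁻¹ * (b * b) * a = b * (a * a) * b⁻¹ := by
  calc a⁻¹ * (b * b) * a = (a⁻¹ * b * a) * (a⁻¹ * b * a) := by group
    _ = (b * a * b⁻¹) * (b * a * b⁻¹) := by rw [← br2 H]
    _ = b * (a * a) * b⁻¹ := by group

theorem br5 (H : a * b * a = b * a * b) : a * (b * (a * a) * b⁻¹) * a⁻¹ = b * b := by
  calc a * (b * (a * a) * b⁻¹) * a⁻¹ = (a * b * a) * (a * b * a⁻¹)⁻¹ := by group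
    _ = (b * a * b) * (a * b * a⁻¹)⁻¹ := by rw [H]
    _ = (b * a * b) * (b⁻¹ * a * b)⁻¹ := by rw [br1 H]
    _ = b * b := by group

theorem br6 (H : a * b * a = b * a * b) :
    a⁻¹ * (b * (a * a) * b⁻¹) * a = (a * a)⁻¹ * (b * b) * (a * a) := by
  calc a⁻¹ * (b * (a * a) * b⁻¹) * a = a⁻¹ * (a⁻¹ * (b * b) * a) * a := by rw [← br4 H]
    _ = (a * a)⁻¹ * (b * b) * (a * a) := by group

theorem br7 (H : a * b * a = b * a * b) : b * a⁻¹ * b⁻¹ = a⁻¹ * b⁻¹ * a := by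
  calc b * a⁻¹ * b⁻¹ = (b * a * b⁻¹)⁻¹ := by group
    _ = (a⁻¹ * b * a)⁻¹ := by rw [br2 H]
    _ = a⁻¹ * b⁻¹ * a := by group

end BraidCalc

/-! ### Basic relations in the braid group -/

variable {n : ℕ}

theorem rel_one {r : FreeGroup (Fin (n - 1))} (h : r ∈ braidRels n) :
    PresentedGroup.mk (braidRels n) r = 1 := by
  apply (QuotientGroup.eq_one_iff _).mpr
  exact Subgroup.subset_normalClosure h

theorem braid_fin (i j : Fin (n - 1)) (h : (i : ℕ) + 1 = (j : ℕ)) :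
    σ i * σ j * σ i = σ j * σ i * σ j := by
  have h2 := rel_one (n := n) (Or.inl ⟨i, j, h, rfl⟩)
  rw [map_mul, map_mul, map_inv, map_mul, map_mul] at h2
  exact mul_inv_eq_one.mp h2

theorem comm_fin (i j : Fin (n - 1)) (h : (i : ℕ) + 2 ≤ (j : ℕ)) :
    σ i * σ j = σ j * σ i := by
  have h2 := rel_one (n := n) (Or.inr ⟨i, j, h, rfl⟩)
  rw [map_mul, map_inv, map_mul] at h2
  exact mul_inv_eq_one.mp h2

/-- Natural-number-indexed generators; out of range indices give `1`. -/
def s (n : ℕ) (k : ℕ) : BraidGroup n :=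
  if h : k < n - 1 then σ ⟨k, h⟩ else 1

theorem s_braid (k : ℕ) (h : k + 2 < n) :
    s n k * s n (k + 1) * s n k = s n (k + 1) * s n k * s n (k + 1) := by
  have h1 : k < n - 1 := by omega
  have h2 : k + 1 < n - 1 := by omega
  simp only [s, dif_pos h1, dif_pos h2]
  exact braid_fin ⟨k, h1⟩ ⟨k + 1, h2⟩ rfl

theorem s_comm (j k : ℕ) (hjk : j + 2 ≤ k) (hk : k + 1 < n) :
    Commute (s n j) (s n k) := by
  have h1 : j < n - 1 := by omega
  have h2 : k < n - 1 := by omega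
  simp only [s, dif_pos h1, dif_pos h2]
  exact comm_fin ⟨j, h1⟩ ⟨k, h2⟩ hjk

/-- The pure braid generators `A_{p, p+g+1}`, defined by recursion on the gap `g`. -/
def Aa (n p : ℕ) : ℕ → BraidGroup n
  | 0 => s n p * s n p
  | g + 1 => s n (p + (g + 1)) * Aa n p g * (s n (p + (g + 1)))⁻¹

/-- The subgroup `G` from the theorem. -/
def GG (n : ℕ) : Subgroup (BraidGroup n) :=
  Subgroup.closure
    ({x : BraidGroup n |
        ∃ j k : Fin (n - 1), (j : ℕ) + 1 = (k : ℕ) ∧ x = σ k * σ j * (σ k)⁻¹} ∪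
     {x : BraidGroup n | ∃ j : Fin (n - 1), x = (σ j) ^ 2})

/-- The subgroup generated by the pure braid generators. -/
def GA (n : ℕ) : Subgroup (BraidGroup n) :=
  Subgroup.closure {x : BraidGroup n | ∃ p g : ℕ, p + g + 2 ≤ n ∧ x = Aa n p g}

theorem mem_GA {p g : ℕ} (h : p + g + 2 ≤ n) : Aa n p g ∈ GA n :=
  Subgroup.subset_closure ⟨p, g, h, rfl⟩

/-- Commutation: `s k` commutes with `A_{p,q}` when `k+1 < p`, or `k ≥ q+1`,
or `p < k < q - 1` (strictly inside). Here `q = p+g+1`. -/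
theorem comm_Aa :
    ∀ g p k, k + 1 < n → p + g + 2 ≤ n →
      (k + 1 < p ∨ p + g + 2 ≤ k ∨ (p < k ∧ k < p + g)) →
      Commute (s n k) (Aa n p g) := by
  intro g
  induction g using Nat.strong_induction_on with
  | _ g IH =>
    match g with
    | 0 =>
      intro p k hk hv hcond
      have hc : Commute (s n k) (s n p) := by
        rcases hcond with h | h | h
        · exact s_comm k p (by omega) (by omega)
        · exact (s_comm p k (by omega) (by omega)).symm
        · omega
      exact hc.mul_right hc
    | g + 1 =>
      intro p k hk hv hcond
      simp only [Aa]
      rcases hcond with h | h | h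
      · -- k + 1 < p
        have hc : Commute (s n k) (s n (p + (g + 1))) := s_comm k _ (by omega) (by omega)
        have hA : Commute (s n k) (Aa n p g) := IH g (by omega) p k hk (by omega) (by omega)
        exact (hc.mul_right hA).mul_right hc.inv_right
      · -- p + g + 3 ≤ k
        have hc : Commute (s n k) (s n (p + (g + 1))) :=
          (s_comm (p + (g + 1)) k (by omega) (by omega)).symm
        have hA : Commute (s n k) (Aa n p g) := IH g (by omega) p k hk (by omega) (by omega)
        exact (hc.mul_right hA).mul_right hc.inv_right
      · -- p < k < p + g + 1
        by_cases hk2 : k < p + g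
        · have hc : Commute (s n k) (s n (p + (g + 1))) := s_comm k _ (by omega) (by omega)
          have hA : Commute (s n k) (Aa n p g) := IH g (by omega) p k hk (by omega) (by omega)
          exact (hc.mul_right hA).mul_right hc.inv_right
        · -- k = p + g, so g ≥ 1 since p < k
          have hkpg : k = p + g := by omega
          obtain ⟨g', rfl⟩ : ∃ g', g = g' + 1 := ⟨g - 1, by omega⟩
          simp only [Aa]
          have ea : p + (g' + 1) = k := by omega
          have eb : p + (g' + 1 + 1) = k + 1 := by omega
          rw [ea, eb]
          set a := s n k
          set b := s n (k + 1)
          set A := Aa n p g' with hA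
          have Hbr : a * b * a = b * a * b := s_braid k (by omega)
          have HbA : Commute b A := IH g' (by omega) p (k + 1) (by omega) (by omega) (by omega)
          show a * (b * (a * A * a⁻¹) * b⁻¹) = (b * (a * A * a⁻¹) * b⁻¹) * a
          calc a * (b * (a * A * a⁻¹) * b⁻¹)
              = (a * b * a) * A * (a⁻¹ * b⁻¹) := by group
            _ = (b * a * b) * A * (a⁻¹ * b⁻¹) := by rw [Hbr]
            _ = b * a * (b * A) * (a⁻¹ * b⁻¹) := by group
            _ = b * a * (A * b) * (a⁻¹ * b⁻¹) := by rw [HbA.eq]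
            _ = b * a * A * (b * a⁻¹ * b⁻¹) := by group
            _ = b * a * A * (a⁻¹ * b⁻¹ * a) := by rw [br7 Hbr]
            _ = (b * (a * A * a⁻¹) * b⁻¹) * a := by group

/-! ### Conjugation formulas -/

/-- `σ_{p-1}⁻¹ A_{p,q} σ_{p-1} = A_{p-1,q}` (with `p = k+1`). -/
theorem E3n : ∀ g k, k + 1 + g + 2 ≤ n →
    (s n k)⁻¹ * Aa n (k + 1) g * s n k = Aa n k (g + 1) := by
  intro g
  induction g with
  | zero =>
    intro k hv
    have Hbr : s n k * s n (k + 1) * s n k = s n (k + 1) * s n k * s n (k + 1) :=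
      s_braid k (by omega)
    have h := br4 Hbr
    simp only [Aa]
    calc (s n k)⁻¹ * (s n (k + 1) * s n (k + 1)) * s n k
        = s n (k + 1) * (s n k * s n k) * (s n (k + 1))⁻¹ := h
      _ = s n (k + (0 + 1)) * (s n k * s n k) * (s n (k + (0 + 1)))⁻¹ := by norm_num
  | succ g IH =>
    intro k hv
    have hq : Commute (s n k) (s n (k + 1 + (g + 1))) := s_comm k _ (by omega) (by omega)
    have h1 : (s n k)⁻¹ * s n (k + 1 + (g + 1)) = s n (k + 1 + (g + 1)) * (s n k)⁻¹ :=
      hq.inv_left.eq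
    have h2 : (s n (k + 1 + (g + 1)))⁻¹ * s n k = s n k * (s n (k + 1 + (g + 1)))⁻¹ :=
      hq.inv_right.eq.symm
    simp only [Aa]
    calc (s n k)⁻¹ * (s n (k + 1 + (g + 1)) * Aa n (k + 1) g * (s n (k + 1 + (g + 1)))⁻¹) * s n k
        = ((s n k)⁻¹ * s n (k + 1 + (g + 1))) * Aa n (k + 1) g *
            ((s n (k + 1 + (g + 1)))⁻¹ * s n k) := by group
      _ = (s n (k + 1 + (g + 1)) * (s n k)⁻¹) * Aa n (k + 1) g *
            (s n k * (s n (k + 1 + (g + 1)))⁻¹) := by rw [h1, h2]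
      _ = s n (k + 1 + (g + 1)) * ((s n k)⁻¹ * Aa n (k + 1) g * s n k) *
            (s n (k + 1 + (g + 1)))⁻¹ := by group
      _ = s n (k + 1 + (g + 1)) * Aa n k (g + 1) * (s n (k + 1 + (g + 1)))⁻¹ := by
            rw [IH k (by omega)]
      _ = s n (k + (g + 1 + 1)) * Aa n k (g + 1) * (s n (k + (g + 1 + 1)))⁻¹ := by
            rw [show k + 1 + (g + 1) = k + (g + 1 + 1) from by omega]

/-- `σ_{p-1} A_{p,q} σ_{p-1}⁻¹ = A_{p,q}⁻¹ A_{p-1,q} A_{p,q}` (with `p = k+1`). -/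
theorem E3p : ∀ g k, k + 1 + g + 2 ≤ n →
    s n k * Aa n (k + 1) g * (s n k)⁻¹ =
      (Aa n (k + 1) g)⁻¹ * Aa n k (g + 1) * Aa n (k + 1) g := by
  intro g
  induction g with
  | zero =>
    intro k hv
    have Hbr : s n k * s n (k + 1) * s n k = s n (k + 1) * s n k * s n (k + 1) :=
      s_braid k (by omega)
    have h := br3 Hbr
    simp only [Aa]
    norm_num
    calc s n k * (s n (k + 1) * s n (k + 1)) * (s n k)⁻¹
        = (s n (k + 1))⁻¹ * (s n k * s n k) * s n (k + 1) := h
      _ = (s n (k + 1) * s n (k + 1))⁻¹ *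
            (s n (k + 1) * (s n k * s n k) * (s n (k + 1))⁻¹) *
            (s n (k + 1) * s n (k + 1)) := by group
      _ = (s n (k + 1))⁻¹ * (s n (k + 1))⁻¹ *
            (s n (k + 1) * (s n k * s n k) * (s n (k + 1))⁻¹) *
            (s n (k + 1) * s n (k + 1)) := by group
  | succ g IH =>
    intro k hv
    have hq : Commute (s n k) (s n (k + 1 + (g + 1))) := s_comm k _ (by omega) (by omega)
    have h1 : s n k * s n (k + 1 + (g + 1)) = s n (k + 1 + (g + 1)) * s n k := hq.eq
    have h2 : (s n (k + 1 + (g + 1)))⁻¹ * (s n k)⁻¹ = (s n k)⁻¹ * (s n (k + 1 + (g + 1)))⁻¹ :=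
      (hq.inv_left.inv_right).eq.symm
    have e2 : k + 1 + (g + 1) = k + (g + 1 + 1) := by omega
    simp only [Aa]
    calc s n k * (s n (k + 1 + (g + 1)) * Aa n (k + 1) g * (s n (k + 1 + (g + 1)))⁻¹) * (s n k)⁻¹
        = (s n k * s n (k + 1 + (g + 1))) * Aa n (k + 1) g *
            ((s n (k + 1 + (g + 1)))⁻¹ * (s n k)⁻¹) := by group
      _ = (s n (k + 1 + (g + 1)) * s n k) * Aa n (k + 1) g *
            ((s n k)⁻¹ * (s n (k + 1 + (g + 1)))⁻¹) := by rw [h1, h2]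
      _ = s n (k + 1 + (g + 1)) * (s n k * Aa n (k + 1) g * (s n k)⁻¹) *
            (s n (k + 1 + (g + 1)))⁻¹ := by group
      _ = s n (k + 1 + (g + 1)) *
            ((Aa n (k + 1) g)⁻¹ * Aa n k (g + 1) * Aa n (k + 1) g) *
            (s n (k + 1 + (g + 1)))⁻¹ := by rw [IH k (by omega)]
      _ = (s n (k + 1 + (g + 1)) * Aa n (k + 1) g * (s n (k + 1 + (g + 1)))⁻¹)⁻¹ *
            (s n (k + 1 + (g + 1)) * Aa n k (g + 1) * (s n (k + 1 + (g + 1)))⁻¹) *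
            (s n (k + 1 + (g + 1)) * Aa n (k + 1) g * (s n (k + 1 + (g + 1)))⁻¹) := by group
      _ = (s n (k + 1 + (g + 1)) * Aa n (k + 1) g * (s n (k + 1 + (g + 1)))⁻¹)⁻¹ *
            Aa n k (g + 1 + 1) *
            (s n (k + 1 + (g + 1)) * Aa n (k + 1) g * (s n (k + 1 + (g + 1)))⁻¹) := by
          rw [e2]; rfl

/-- `σ_p A_{p,q} σ_p⁻¹ = A_{p+1,q}` for `q > p+1`. -/
theorem E4p : ∀ g p, p + g + 3 ≤ n →
    s n p * Aa n p (g + 1) * (s n p)⁻¹ = Aa n (p + 1) g := by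
  intro g
  induction g with
  | zero =>
    intro p hv
    have Hbr : s n p * s n (p + 1) * s n p = s n (p + 1) * s n p * s n (p + 1) :=
      s_braid p (by omega)
    have h := br5 Hbr
    simp only [Aa]
    norm_num
    exact h
  | succ g IH =>
    intro p hv
    have hq : Commute (s n p) (s n (p + (g + 1 + 1))) := s_comm p _ (by omega) (by omega)
    have h1 : s n p * s n (p + (g + 1 + 1)) = s n (p + (g + 1 + 1)) * s n p := hq.eq
    have h2 : (s n (p + (g + 1 + 1)))⁻¹ * (s n p)⁻¹ = (s n p)⁻¹ * (s n (p + (g + 1 + 1)))⁻¹ :=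
      (hq.inv_left.inv_right).eq.symm
    have e2 : p + (g + 1 + 1) = p + 1 + (g + 1) := by omega
    simp only [Aa]
    calc s n p * (s n (p + (g + 1 + 1)) * Aa n p (g + 1) * (s n (p + (g + 1 + 1)))⁻¹) * (s n p)⁻¹
        = (s n p * s n (p + (g + 1 + 1))) * Aa n p (g + 1) *
            ((s n (p + (g + 1 + 1)))⁻¹ * (s n p)⁻¹) := by group
      _ = (s n (p + (g + 1 + 1)) * s n p) * Aa n p (g + 1) *
            ((s n p)⁻¹ * (s n (p + (g + 1 + 1)))⁻¹) := by rw [h1, h2]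
      _ = s n (p + (g + 1 + 1)) * (s n p * Aa n p (g + 1) * (s n p)⁻¹) *
            (s n (p + (g + 1 + 1)))⁻¹ := by group
      _ = s n (p + (g + 1 + 1)) * Aa n (p + 1) g * (s n (p + (g + 1 + 1)))⁻¹ := by
            rw [IH p (by omega)]
      _ = s n (p + 1 + (g + 1)) * Aa n (p + 1) g * (s n (p + 1 + (g + 1)))⁻¹ := by rw [e2]

/-- `σ_p⁻¹ A_{p,q} σ_p = A_{p,p+1}⁻¹ A_{p+1,q} A_{p,p+1}` for `q > p+1`. -/
theorem E4n : ∀ g p, p + g + 3 ≤ n →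
    (s n p)⁻¹ * Aa n p (g + 1) * s n p = (Aa n p 0)⁻¹ * Aa n (p + 1) g * Aa n p 0 := by
  intro g
  induction g with
  | zero =>
    intro p hv
    have Hbr : s n p * s n (p + 1) * s n p = s n (p + 1) * s n p * s n (p + 1) :=
      s_braid p (by omega)
    have h := br6 Hbr
    simp only [Aa]
    norm_num
    calc (s n p)⁻¹ * (s n (p + 1) * (s n p * s n p) * (s n (p + 1))⁻¹) * s n p
        = (s n p * s n p)⁻¹ * (s n (p + 1) * s n (p + 1)) * (s n p * s n p) := h
      _ = (s n p)⁻¹ * (s n p)⁻¹ * (s n (p + 1) * s n (p + 1)) * (s n p * s n p) := by group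
  | succ g IH =>
    intro p hv
    have hq : Commute (s n p) (s n (p + (g + 1 + 1))) := s_comm p _ (by omega) (by omega)
    have h1 : (s n p)⁻¹ * s n (p + (g + 1 + 1)) = s n (p + (g + 1 + 1)) * (s n p)⁻¹ :=
      hq.inv_left.eq
    have h2 : (s n (p + (g + 1 + 1)))⁻¹ * s n p = s n p * (s n (p + (g + 1 + 1)))⁻¹ :=
      hq.inv_right.eq.symm
    have e2 : p + (g + 1 + 1) = p + 1 + (g + 1) := by omega
    simp only [Aa]
    calc (s n p)⁻¹ * (s n (p + (g + 1 + 1)) * Aa n p (g + 1) * (s n (p + (g + 1 + 1)))⁻¹) * s n p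
        = ((s n p)⁻¹ * s n (p + (g + 1 + 1))) * Aa n p (g + 1) *
            ((s n (p + (g + 1 + 1)))⁻¹ * s n p) := by group
      _ = (s n (p + (g + 1 + 1)) * (s n p)⁻¹) * Aa n p (g + 1) *
            (s n p * (s n (p + (g + 1 + 1)))⁻¹) := by rw [h1, h2]
      _ = s n (p + (g + 1 + 1)) * ((s n p)⁻¹ * Aa n p (g + 1) * s n p) *
            (s n (p + (g + 1 + 1)))⁻¹ := by group
      _ = s n (p + (g + 1 + 1)) * ((Aa n p 0)⁻¹ * Aa n (p + 1) g * Aa n p 0) *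
            (s n (p + (g + 1 + 1)))⁻¹ := by rw [IH p (by omega)]
      _ = (Aa n p 0)⁻¹ * (s n (p + (g + 1 + 1)) * Aa n (p + 1) g * (s n (p + (g + 1 + 1)))⁻¹) *
            Aa n p 0 := by
          have c1 : s n (p + (g + 1 + 1)) * (Aa n p 0)⁻¹ = (Aa n p 0)⁻¹ * s n (p + (g + 1 + 1)) := by
            simp only [Aa]
            have : Commute (s n (p + (g + 1 + 1))) ((s n p * s n p)⁻¹) :=
              (hq.symm.mul_right hq.symm).inv_right
            exact this.eq
          have c2 : Aa n p 0 * (s n (p + (g + 1 + 1)))⁻¹ = (s n (p + (g + 1 + 1)))⁻¹ * Aa n p 0 := by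
            simp only [Aa]
            have : Commute ((s n p * s n p)) ((s n (p + (g + 1 + 1)))⁻¹) :=
              (hq.mul_left hq).inv_right
            exact this.eq
          calc s n (p + (g + 1 + 1)) * ((Aa n p 0)⁻¹ * Aa n (p + 1) g * Aa n p 0) *
                (s n (p + (g + 1 + 1)))⁻¹
              = (s n (p + (g + 1 + 1)) * (Aa n p 0)⁻¹) * Aa n (p + 1) g *
                (Aa n p 0 * (s n (p + (g + 1 + 1)))⁻¹) := by group
            _ = ((Aa n p 0)⁻¹ * s n (p + (g + 1 + 1))) * Aa n (p + 1) g *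
                ((s n (p + (g + 1 + 1)))⁻¹ * Aa n p 0) := by rw [c1, c2]
            _ = (Aa n p 0)⁻¹ * (s n (p + (g + 1 + 1)) * Aa n (p + 1) g *
                (s n (p + (g + 1 + 1)))⁻¹) * Aa n p 0 := by group
      _ = (Aa n p 0)⁻¹ * (s n (p + 1 + (g + 1)) * Aa n (p + 1) g * (s n (p + 1 + (g + 1)))⁻¹) *
            Aa n p 0 := by rw [e2]

/-- `σ_q⁻¹ A_{p,q} σ_q = A_{q,q+1}⁻¹ A_{p,q+1} A_{q,q+1}`. -/
theorem E5n (g p : ℕ) :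
    (s n (p + (g + 1)))⁻¹ * Aa n p g * s n (p + (g + 1)) =
      (Aa n (p + (g + 1)) 0)⁻¹ * Aa n p (g + 1) * Aa n (p + (g + 1)) 0 := by
  conv_rhs => rw [show Aa n p (g + 1) = s n (p + (g + 1)) * Aa n p g * (s n (p + (g + 1)))⁻¹ from rfl]
  simp only [Aa]
  group

/-- `σ_{q-1} A_{p,q} σ_{q-1}⁻¹ = A_{q-1,q} A_{p,q-1} A_{q-1,q}⁻¹`. -/
theorem E6p (g p : ℕ) :
    s n (p + (g + 1)) * Aa n p (g + 1) * (s n (p + (g + 1)))⁻¹ =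
      Aa n (p + (g + 1)) 0 * Aa n p g * (Aa n (p + (g + 1)) 0)⁻¹ := by
  simp only [Aa]
  group

/-- `σ_{q-1}⁻¹ A_{p,q} σ_{q-1} = A_{p,q-1}`. -/
theorem E6n (g p : ℕ) :
    (s n (p + (g + 1)))⁻¹ * Aa n p (g + 1) * s n (p + (g + 1)) = Aa n p g := by
  simp only [Aa]
  group

/-! ### Membership of the pure braid generators in `G` -/

theorem t_mem (j : ℕ) (hj : j + 2 < n) :
    s n (j + 1) * s n j * (s n (j + 1))⁻¹ ∈ GG n := by
  have h1 : j < n - 1 := by omega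
  have h2 : j + 1 < n - 1 := by omega
  simp only [s, dif_pos h1, dif_pos h2]
  apply Subgroup.subset_closure
  exact Or.inl ⟨⟨j, h1⟩, ⟨j + 1, h2⟩, rfl, rfl⟩

theorem sq_mem (k : ℕ) (hk : k + 2 ≤ n) : s n k * s n k ∈ GG n := by
  have h1 : k < n - 1 := by omega
  simp only [s, dif_pos h1]
  apply Subgroup.subset_closure
  exact Or.inr ⟨⟨k, h1⟩, (pow_two _).symm⟩

theorem letter_mem : ∀ g p, p + g + 2 ≤ n → Aa n p g ∈ GG n := by
  intro g
  induction g using Nat.strong_induction_on with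
  | _ g IH =>
    match g with
    | 0 =>
      intro p hv
      exact sq_mem p (by omega)
    | 1 =>
      intro p hv
      have ht := t_mem (n := n) p (by omega)
      have e : Aa n p 1 =
          (s n (p + 1) * s n p * (s n (p + 1))⁻¹) * (s n (p + 1) * s n p * (s n (p + 1))⁻¹) := by
        simp only [Aa]
        norm_num
      rw [e]
      exact mul_mem ht ht
    | g + 2 =>
      intro p hv
      -- Aa n p (g+2) = t * Aa n p g * t⁻¹ with t = s (p+g+2) * s (p+g+1) * (s (p+g+2))⁻¹
      have hc : Commute (s n (p + g + 2)) (Aa n p g) :=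
        comm_Aa g p (p + g + 2) (by omega) (by omega) (by omega)
      have e : Aa n p (g + 2) =
          (s n (p + g + 2) * s n (p + g + 1) * (s n (p + g + 2))⁻¹) * Aa n p g *
          (s n (p + g + 2) * s n (p + g + 1) * (s n (p + g + 2))⁻¹)⁻¹ := by
        have h1 : (s n (p + g + 2))⁻¹ * Aa n p g = Aa n p g * (s n (p + g + 2))⁻¹ :=
          hc.inv_left.eq
        calc Aa n p (g + 2)
            = s n (p + (g + 1 + 1)) * (s n (p + (g + 1)) * Aa n p g * (s n (p + (g + 1)))⁻¹) *
              (s n (p + (g + 1 + 1)))⁻¹ := rfl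
          _ = s n (p + g + 2) * (s n (p + g + 1) * Aa n p g * (s n (p + g + 1))⁻¹) *
              (s n (p + g + 2))⁻¹ := by
              rw [show p + (g + 1 + 1) = p + g + 2 from by omega,
                show p + (g + 1) = p + g + 1 from by omega]
          _ = s n (p + g + 2) * s n (p + g + 1) * (Aa n p g * (s n (p + g + 2))⁻¹) *
              s n (p + g + 2) * (s n (p + g + 1))⁻¹ * (s n (p + g + 2))⁻¹ := by group
          _ = s n (p + g + 2) * s n (p + g + 1) * ((s n (p + g + 2))⁻¹ * Aa n p g) *
              s n (p + g + 2) * (s n (p + g + 1))⁻¹ * (s n (p + g + 2))⁻¹ := by rw [h1]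
          _ = (s n (p + g + 2) * s n (p + g + 1) * (s n (p + g + 2))⁻¹) * Aa n p g *
              (s n (p + g + 2) * s n (p + g + 1) * (s n (p + g + 2))⁻¹)⁻¹ := by group
      rw [e]
      have ht := t_mem (n := n) (p + g + 1) (by omega)
      rw [show p + g + 1 + 1 = p + g + 2 from by omega] at ht
      exact mul_mem (mul_mem ht (IH g (by omega) p (by omega))) (inv_mem ht)

theorem GA_le_GG : GA n ≤ GG n := by
  apply (Subgroup.closure_le _).mpr
  rintro x ⟨p, g, h, rfl⟩
  exact letter_mem g p h

/-! ### Conjugation of the pure braid generators by generators stays in `GA` -/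

theorem conj_pos (k p g : ℕ) (hk : k + 1 < n) (hv : p + g + 2 ≤ n) :
    s n k * Aa n p g * (s n k)⁻¹ ∈ GA n := by
  by_cases h1 : k + 1 < p ∨ p + g + 2 ≤ k ∨ (p < k ∧ k < p + g)
  · have hc := comm_Aa g p k hk hv h1
    have e : s n k * Aa n p g * (s n k)⁻¹ = Aa n p g := by
      rw [hc.eq]; group
    rw [e]; exact mem_GA hv
  · -- remaining cases: k+1 = p, k = p, k = p+g (g ≥ 1), k = p+g+1
    by_cases h2 : k + 1 = p
    · obtain rfl : p = k + 1 := h2.symm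
      rw [E3p g k hv]
      exact mul_mem (mul_mem (inv_mem (mem_GA hv)) (mem_GA (by omega))) (mem_GA hv)
    by_cases h3 : k = p
    · subst h3
      rcases g with _ | g'
      · have e : s n k * Aa n k 0 * (s n k)⁻¹ = Aa n k 0 := by
          simp only [Aa]; group
        rw [e]; exact mem_GA hv
      · rw [E4p g' k (by omega)]
        exact mem_GA (by omega)
    by_cases h4 : k = p + g
    · have hg : 1 ≤ g := by omega
      obtain ⟨g', rfl⟩ : ∃ g', g = g' + 1 := ⟨g - 1, by omega⟩
      subst h4
      rw [E6p g' p]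
      exact mul_mem (mul_mem (mem_GA (by omega)) (mem_GA (by omega))) (inv_mem (mem_GA (by omega)))
    · have h5 : k = p + g + 1 := by omega
      subst h5
      rw [show p + g + 1 = p + (g + 1) from by omega]
      rw [show s n (p + (g + 1)) * Aa n p g * (s n (p + (g + 1)))⁻¹ = Aa n p (g + 1) from rfl]
      exact mem_GA (by omega)

theorem conj_neg (k p g : ℕ) (hk : k + 1 < n) (hv : p + g + 2 ≤ n) :
    (s n k)⁻¹ * Aa n p g * s n k ∈ GA n := by
  by_cases h1 : k + 1 < p ∨ p + g + 2 ≤ k ∨ (p < k ∧ k < p + g)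
  · have hc := comm_Aa g p k hk hv h1
    have e : (s n k)⁻¹ * Aa n p g * s n k = Aa n p g := by
      rw [hc.inv_left.eq]; group
    rw [e]; exact mem_GA hv
  · by_cases h2 : k + 1 = p
    · obtain rfl : p = k + 1 := h2.symm
      rw [E3n g k hv]
      exact mem_GA (by omega)
    by_cases h3 : k = p
    · subst h3
      rcases g with _ | g'
      · have e : (s n k)⁻¹ * Aa n k 0 * s n k = Aa n k 0 := by
          simp only [Aa]; group
        rw [e]; exact mem_GA hv
      · rw [E4n g' k (by omega)]
        exact mul_mem (mul_mem (inv_mem (mem_GA (by omega))) (mem_GA (by omega)))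
          (mem_GA (by omega))
    by_cases h4 : k = p + g
    · have hg : 1 ≤ g := by omega
      obtain ⟨g', rfl⟩ : ∃ g', g = g' + 1 := ⟨g - 1, by omega⟩
      subst h4
      rw [E6n g' p]
      exact mem_GA (by omega)
    · have h5 : k = p + g + 1 := by omega
      subst h5
      rw [show p + g + 1 = p + (g + 1) from by omega]
      rw [E5n g p]
      exact mul_mem (mul_mem (inv_mem (mem_GA (by omega))) (mem_GA (by omega)))
        (mem_GA (by omega))

/-! ### The main induction over words -/

theorem push (V : BraidGroup n) (hV : ∀ p g, p + g + 2 ≤ n → V * Aa n p g * V⁻¹ ∈ GG n)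
    {y : BraidGroup n} (hy : y ∈ GA n) : V * y * V⁻¹ ∈ GG n := by
  induction hy using Subgroup.closure_induction with
  | mem x hx =>
    obtain ⟨p, g, h, rfl⟩ := hx
    exact hV p g h
  | one => simpa using one_mem (GG n)
  | mul x y hx hy ihx ihy =>
    have e : V * (x * y) * V⁻¹ = (V * x * V⁻¹) * (V * y * V⁻¹) := by group
    rw [e]; exact mul_mem ihx ihy
  | inv x hx ihx =>
    have e : V * x⁻¹ * V⁻¹ = (V * x * V⁻¹)⁻¹ := by group
    rw [e]; exact inv_mem ihx

theorem main (hn : 3 ≤ n) :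
    ∀ (W : BraidGroup n) (p g : ℕ), p + g + 2 ≤ n → W * Aa n p g * W⁻¹ ∈ GG n := by
  have key : ∀ L : List (Fin (n - 1) × Bool), ∀ p g, p + g + 2 ≤ n →
      (PresentedGroup.mk (braidRels n) (FreeGroup.mk L)) * Aa n p g *
        (PresentedGroup.mk (braidRels n) (FreeGroup.mk L))⁻¹ ∈ GG n := by
    intro L
    induction L using List.reverseRecOn with
    | nil =>
      intro p g h
      rw [← FreeGroup.one_eq_mk, map_one]
      simpa using letter_mem g p h
    | append_singleton L x ih =>
      intro p g h
      obtain ⟨r, b⟩ := x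
      rw [← FreeGroup.mul_mk, map_mul]
      set V := PresentedGroup.mk (braidRels n) (FreeGroup.mk L) with hV
      set u := PresentedGroup.mk (braidRels n) (FreeGroup.mk [(r, b)]) with hu
      have e : (V * u) * Aa n p g * (V * u)⁻¹ = V * (u * Aa n p g * u⁻¹) * V⁻¹ := by group
      rw [e]
      have hr : (r : ℕ) + 1 < n := by
        have := r.isLt
        omega
      have hmem : u * Aa n p g * u⁻¹ ∈ GA n := by
        have hs : s n (r : ℕ) = PresentedGroup.mk (braidRels n) (FreeGroup.of r) := by
          simp only [s, dif_pos r.isLt]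
          rfl
        cases b with
        | true =>
          have hu2 : u = s n (r : ℕ) := by
            rw [hu, hs]
            rfl
          rw [hu2]
          exact conj_pos (r : ℕ) p g hr h
        | false =>
          have hu2 : u = (s n (r : ℕ))⁻¹ := by
            rw [hu, hs, ← map_inv]
            congr 1
          rw [hu2]
          simpa using conj_neg (r : ℕ) p g hr h
      exact push V (fun p g h => ih p g h) hmem
  intro W p g h
  obtain ⟨x, rfl⟩ := PresentedGroup.mk_surjective (braidRels n) W
  have h2 := key x.toWord p g h
  rwa [FreeGroup.mk_toWord] at h2

end BraidProof

/-- For `n ≥ 3`, every conjugate `W σ_i² W⁻¹` of a square of a standard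
generator lies in the subgroup `G` of `B_n` generated by the elements
`σ_{j+1} σ_j σ_{j+1}⁻¹` together with the squares `σ_j²`; equivalently, the
normal closure of the squares of the generators is contained in `G`. -/
theorem statement0 (n : ℕ) (hn : 3 ≤ n) (W : BraidGroup n) (i : Fin (n - 1)) :
    W * (σ i) ^ 2 * W⁻¹ ∈
      Subgroup.closure
        ({x : BraidGroup n |
            ∃ j k : Fin (n - 1), (j : ℕ) + 1 = (k : ℕ) ∧ x = σ k * σ j * (σ k)⁻¹} ∪
         {x : BraidGroup n | ∃ j : Fin (n - 1), x = (σ j) ^ 2}) := by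
  have hv : (i : ℕ) + 0 + 2 ≤ n := by
    have := i.isLt
    omega
  have h := BraidProof.main hn W (i : ℕ) 0 hv
  have e : BraidProof.Aa n (i : ℕ) 0 = (σ i) ^ 2 := by
    simp only [BraidProof.Aa, BraidProof.s, dif_pos i.isLt, Fin.eta, pow_two]
  rw [e] at h
  exact h

end Paper
end

section
/- (Johnson) Let g ≥ 3. The group Sp^{(2)}(2g), the kernel of the reduction homomorphism Sp(2g, ℤ) → Sp(2g, ℤ/2), is generated by the square transvections T_a^2 where a ranges over all primitive elements of L = ℤ^{2g}. -/
namespace Paper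

/-- `L g = ℤ^{2g}`, with basis indexed by `Fin g × Bool`:
`(i, false)` corresponds to `x_i` and `(i, true)` to `y_i`. -/
abbrev L (g : ℕ) := (Fin g × Bool) → ℤ

/-- The standard symplectic form on `ℤ^{2g}`. -/
def omg {g : ℕ} (a b : L g) : ℤ :=
  ∑ i : Fin g, (a (i, false) * b (i, true) - a (i, true) * b (i, false))

lemma omg_add_right {g : ℕ} (a v w : L g) : omg a (v + w) = omg a v + omg a w := by
  simp only [omg, Pi.add_apply]
  rw [← Finset.sum_add_distrib]
  exact Finset.sum_congr rfl fun i _ => by ring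

lemma omg_sub_right {g : ℕ} (a v w : L g) : omg a (v - w) = omg a v - omg a w := by
  simp only [omg, Pi.sub_apply]
  rw [← Finset.sum_sub_distrib]
  exact Finset.sum_congr rfl fun i _ => by ring

lemma omg_smul_right {g : ℕ} (a : L g) (c : ℤ) (v : L g) : omg a (c • v) = c * omg a v := by
  simp only [omg, Pi.smul_apply, smul_eq_mul]
  rw [Finset.mul_sum]
  exact Finset.sum_congr rfl fun i _ => by ring

lemma omg_self {g : ℕ} (a : L g) : omg a a = 0 :=
  Finset.sum_eq_zero fun i _ => by ring

/-- A vector of `ℤ^{2g}` is primitive if it is not a nontrivial integer multiple. -/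
def Primitive {g : ℕ} (a : L g) : Prop :=
  ¬ ∃ (n : ℤ) (b : L g), n ≠ 0 ∧ n ≠ 1 ∧ n ≠ -1 ∧ a = n • b

/-- The transvection `T_a : v ↦ v + (a,v)·a`, as a linear automorphism of `ℤ^{2g}`. -/
def T {g : ℕ} (a : L g) : L g ≃ₗ[ℤ] L g where
  toFun v := v + omg a v • a
  invFun v := v - omg a v • a
  map_add' v w := by
    show (v + w) + omg a (v + w) • a = (v + omg a v • a) + (w + omg a w • a)
    rw [omg_add_right, add_smul]; abel
  map_smul' c v := by
    show (c • v) + omg a (c • v) • a = c • (v + omg a v • a)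
    rw [omg_smul_right, mul_smul, smul_add]
  left_inv v := by
    show v + omg a v • a - omg a (v + omg a v • a) • a = v
    rw [omg_add_right, omg_smul_right, omg_self, mul_zero, add_zero]
    abel
  right_inv v := by
    show v - omg a v • a + omg a (v - omg a v • a) • a = v
    rw [omg_sub_right, omg_smul_right, omg_self, mul_zero, sub_zero]
    abel

/-- `Sp(2g, ℤ)`: the group of linear automorphisms of `ℤ^{2g}` preserving
the symplectic form. -/
def Sp (g : ℕ) : Subgroup (L g ≃ₗ[ℤ] L g) where
  carrier := {φ | ∀ v w : L g, omg (φ v) (φ w) = omg v w}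
  one_mem' := fun v w => rfl
  mul_mem' := by
    intro φ ψ hφ hψ v w
    exact (hφ (ψ v) (ψ w)).trans (hψ v w)
  inv_mem' := by
    intro φ hφ v w
    have h := hφ (φ⁻¹ v) (φ⁻¹ w)
    have h1 : φ (φ⁻¹ v) = v := φ.apply_symm_apply v
    have h2 : φ (φ⁻¹ w) = w := φ.apply_symm_apply w
    rw [h1, h2] at h
    exact h.symm

/-- Reduction modulo 2, as a monoid homomorphism from the linear automorphism
group of `ℤ^{2g}` to matrices over `ℤ/2`. -/
def redHom (g : ℕ) :
    (L g ≃ₗ[ℤ] L g) →* Matrix (Fin g × Bool) (Fin g × Bool) (ZMod 2) where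
  toFun φ := (LinearMap.toMatrix' (φ : L g →ₗ[ℤ] L g)).map (Int.castRingHom (ZMod 2))
  map_one' := by
    show (LinearMap.toMatrix' ((1 : L g ≃ₗ[ℤ] L g) : L g →ₗ[ℤ] L g)).map
      (Int.castRingHom (ZMod 2)) = 1
    rw [LinearEquiv.coe_toLinearMap_one, LinearMap.toMatrix'_id,
      Matrix.map_one _ (map_zero _) (map_one _)]
  map_mul' φ ψ := by
    show (LinearMap.toMatrix' ((φ * ψ : L g ≃ₗ[ℤ] L g) : L g →ₗ[ℤ] L g)).map
        (Int.castRingHom (ZMod 2)) =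
      (LinearMap.toMatrix' (φ : L g →ₗ[ℤ] L g)).map (Int.castRingHom (ZMod 2)) *
      (LinearMap.toMatrix' (ψ : L g →ₗ[ℤ] L g)).map (Int.castRingHom (ZMod 2))
    rw [LinearEquiv.coe_toLinearMap_mul, LinearMap.toMatrix'_mul, Matrix.map_mul]

/-- `Sp^{(2)}(2g)`: the kernel of the reduction homomorphism
`Sp(2g, ℤ) → Sp(2g, ℤ/2)`, i.e. the symplectic automorphisms reducing to
the identity modulo 2. -/
def SpTwo (g : ℕ) : Subgroup (L g ≃ₗ[ℤ] L g) := Sp g ⊓ (redHom g).ker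

/-!
A square transvection `T_c^{2m}` moves `v` to `v + 2m (c, v) c`, and it fixes every vector
orthogonal to `c`. Given `φ ∈ Sp^{(2)}(2g)` fixing `x_i, y_i` for `i < k`, symplecticity forces
`φ x_k` to be supported on the pairs `≥ k`, and it is primitive and congruent to `x_k` mod 2.
Square transvections about vectors supported on the pairs `≥ k` bring it back to `x_k`: the
Euclidean algorithm on the `k`-th pair kills its `y_k`-coordinate, and as long as the
`x_k`-coordinate `a` is not `±1`, primitivity provides a coordinate not divisible by `a`, which one
more move feeds into the Euclidean algorithm to make `|a|` smaller. Once `a = ±1`, the remaining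
coordinates are even and are cleared one at a time. The same clearing, with moves orthogonal to
`x_k`, then brings the image of `y_k` back to `y_k` while fixing `x_k`. After `g` such steps `φ`
has become a product of square transvections.
-/

lemma exists_natAbs_add_two_mul_lt {a b : ℤ} (hb : b ≠ 0) (h : Odd (a + b)) :
    ∃ m, (a + 2 * m * b).natAbs < b.natAbs := by
  have h2b : 2 * b ≠ 0 := mul_ne_zero two_ne_zero hb
  have hdiv := Int.mul_ediv_add_emod a (2 * b)
  have h0 := Int.emod_nonneg a h2b
  have h1 := Int.emod_lt a h2b
  have hpar : a % (2 * b) % 2 = a % 2 := Int.emod_emod_of_dvd a (dvd_mul_right 2 b)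
  obtain ⟨k, hk⟩ := h
  by_cases hr : a % (2 * b) < b.natAbs
  · refine ⟨-(a / (2 * b)), ?_⟩
    have : a + 2 * -(a / (2 * b)) * b = a % (2 * b) := by linear_combination -hdiv
    omega
  · refine ⟨-(a / (2 * b)) - b.sign, ?_⟩
    have : a + 2 * (-(a / (2 * b)) - b.sign) * b = a % (2 * b) - 2 * b.natAbs := by
      linear_combination -hdiv - 2 * Int.sign_mul_self b
    omega

lemma _root_.Odd.of_dvd_int {d a : ℤ} (ha : Odd a) (h : d ∣ a) : Odd d := by
  obtain ⟨c, rfl⟩ := h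
  exact (Int.odd_mul.mp ha).1

section Symplectic

variable {g : ℕ}

lemma omg_comm (a b : L g) : omg a b = -omg b a := by
  simp only [omg, ← Finset.sum_neg_distrib]
  exact Finset.sum_congr rfl fun i _ => by ring

lemma omg_add_left (a b v : L g) : omg (a + b) v = omg a v + omg b v := by
  rw [omg_comm, omg_add_right, neg_add, ← omg_comm, ← omg_comm]

lemma omg_smul_left (c : ℤ) (a v : L g) : omg (c • a) v = c * omg a v := by
  rw [omg_comm, omg_smul_right, omg_comm a, mul_neg]

lemma omg_neg_right (a v : L g) : omg a (-v) = -omg a v := by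
  simpa using omg_smul_right a (-1) v

lemma omg_zero_right (a : L g) : omg a 0 = 0 := by
  simpa using omg_smul_right a 0 0

lemma omg_single_false (i : Fin g) (v : L g) : omg (Pi.single (i, false) 1) v = v (i, true) := by
  simp [omg, Pi.single_apply]

lemma omg_single_true (i : Fin g) (v : L g) : omg (Pi.single (i, true) 1) v = -v (i, false) := by
  simp [omg, Pi.single_apply]

lemma omg_single_single (i : Fin g) :
    omg (Pi.single (i, false) 1) (Pi.single (i, true) 1) = 1 := by
  simp [omg_single_false]

lemma primitive_of_apply_eq_one {a : L g} {p : Fin g × Bool} (h : a p = 1) : Primitive a := by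
  rintro ⟨n, b, -, hn1, hn1', rfl⟩
  rcases Int.isUnit_iff.mp (IsUnit.of_mul_eq_one (b p) h) with rfl | rfl
  exacts [hn1 rfl, hn1' rfl]

lemma Primitive.map {a : L g} (ha : Primitive a) (φ : L g ≃ₗ[ℤ] L g) : Primitive (φ a) := by
  rintro ⟨n, b, hn0, hn1, hn1', hab⟩
  exact ha ⟨n, φ.symm b, hn0, hn1, hn1', by rw [← map_smul, ← hab, φ.symm_apply_apply]⟩

lemma Primitive.exists_not_dvd {v : L g} (hv : Primitive v) {d : ℤ} (hd0 : d ≠ 0)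
    (hd : ¬IsUnit d) : ∃ q, ¬d ∣ v q := by
  by_contra! hdvd
  refine hv ⟨d, fun q => v q / d, hd0, fun h => hd (h ▸ isUnit_one),
    fun h => hd (h ▸ isUnit_one.neg), funext fun q => ?_⟩
  simp [Int.mul_ediv_cancel' (hdvd q)]

lemma T_apply (a v : L g) : T a v = v + omg a v • a := rfl

lemma T_inv_apply (a v : L g) : (T a)⁻¹ v = v - omg a v • a := rfl

lemma T_zpow_apply (a v : L g) (n : ℤ) : (T a ^ n) v = v + (n * omg a v) • a := by
  induction n using Int.induction_on generalizing v with
  | zero => simp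
  | succ n ih =>
    rw [zpow_add_one, LinearEquiv.mul_apply, ih, T_apply, omg_add_right, omg_smul_right, omg_self]
    module
  | pred n ih =>
    rw [zpow_sub_one, LinearEquiv.mul_apply, ih, T_inv_apply, omg_sub_right, omg_smul_right,
      omg_self]
    module

lemma T_mem_Sp (a : L g) : T a ∈ Sp g := by
  intro v w
  simp only [T_apply, omg_add_left, omg_add_right, omg_smul_left, omg_smul_right, omg_self]
  rw [omg_comm v a]
  ring

lemma redHom_apply (φ : L g ≃ₗ[ℤ] L g) (p q : Fin g × Bool) :
    redHom g φ p q = (φ (Pi.single q 1) p : ZMod 2) := by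
  simp [redHom, LinearMap.toMatrix'_apply]

lemma T_sq_mem_SpTwo (a : L g) : T a ^ 2 ∈ SpTwo g := by
  refine ⟨pow_mem (T_mem_Sp a) 2, MonoidHom.mem_ker.mpr (Matrix.ext fun p q => ?_)⟩
  have h2 : (2 : ZMod 2) = 0 := rfl
  rw [redHom_apply, ← zpow_natCast, T_zpow_apply, Matrix.one_apply]
  simp [Pi.single_apply, h2]

lemma intCast_apply_of_mem_ker {φ : L g ≃ₗ[ℤ] L g} (hφ : φ ∈ (redHom g).ker) (v : L g)
    (q : Fin g × Bool) : (φ v q : ZMod 2) = v q := by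
  have h := RingHom.map_mulVec (Int.castRingHom (ZMod 2)) (LinearMap.toMatrix' φ.toLinearMap) v q
  rw [LinearMap.toMatrix'_mulVec] at h
  change _ = (redHom g φ).mulVec _ q at h
  rwa [MonoidHom.mem_ker.mp hφ, Matrix.one_mulVec] at h

lemma apply_eq_of_fixes {φ : L g ≃ₗ[ℤ] L g} (hφ : φ ∈ Sp g) {i : Fin g}
    (hfix : ∀ b, φ (Pi.single (i, b) 1) = Pi.single (i, b) 1) (v : L g) (b : Bool) :
    φ v (i, b) = v (i, b) := by
  cases b
  · simpa [omg_single_true, hfix] using hφ (Pi.single (i, true) 1) v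
  · simpa [omg_single_false, hfix] using hφ (Pi.single (i, false) 1) v

end Symplectic

section SquareTransvections

variable {g : ℕ} {C : L g → Prop}

def sqTransvGroup (C : L g → Prop) : Subgroup (L g ≃ₗ[ℤ] L g) :=
  Subgroup.closure {φ | ∃ c, C c ∧ φ = T c ^ 2}

lemma T_zpow_two_mul_mem {c : L g} (hc : C c) (m : ℤ) : T c ^ (2 * m) ∈ sqTransvGroup C := by
  rw [zpow_mul, zpow_ofNat]
  have hsq : T c ^ 2 ∈ sqTransvGroup C := Subgroup.subset_closure ⟨c, hc, rfl⟩
  exact zpow_mem hsq m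

lemma sqTransvGroup_mono {C' : L g → Prop} (h : ∀ c, C c → C' c) :
    sqTransvGroup C ≤ sqTransvGroup C' :=
  Subgroup.closure_mono <| by
    rintro _ ⟨c, hc, rfl⟩
    exact ⟨c, h c hc, rfl⟩

lemma sqTransvGroup_le_SpTwo : sqTransvGroup C ≤ SpTwo g :=
  (Subgroup.closure_le _).mpr <| by
    rintro _ ⟨c, -, rfl⟩
    exact T_sq_mem_SpTwo c

lemma apply_eq_of_mem_sqTransvGroup {u : L g} (hu : ∀ c, C c → omg c u = 0)
    {n : L g ≃ₗ[ℤ] L g} (hn : n ∈ sqTransvGroup C) : n u = u := by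
  have : sqTransvGroup C ≤ MulAction.stabilizer (L g ≃ₗ[ℤ] L g) u := by
    refine (Subgroup.closure_le _).mpr fun _ ⟨c, hc, hφ⟩ => ?_
    rw [SetLike.mem_coe, MulAction.mem_stabilizer_iff, LinearEquiv.smul_def, hφ,
      ← zpow_natCast, T_zpow_apply, hu c hc]
    simp
  exact this hn

def Reach (C : L g → Prop) (v w : L g) : Prop := ∃ n ∈ sqTransvGroup C, n v = w

lemma Reach.refl (v : L g) : Reach C v v := ⟨1, one_mem _, rfl⟩

lemma Reach.trans {u v w : L g} (h₁ : Reach C u v) (h₂ : Reach C v w) : Reach C u w := by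
  obtain ⟨n₁, hn₁, rfl⟩ := h₁
  obtain ⟨n₂, hn₂, rfl⟩ := h₂
  exact ⟨n₂ * n₁, mul_mem hn₂ hn₁, rfl⟩

lemma reach_add_smul {c : L g} (hc : C c) (m : ℤ) (v : L g) :
    Reach C v (v + (2 * m * omg c v) • c) :=
  ⟨T c ^ (2 * m), T_zpow_two_mul_mem hc m, T_zpow_apply c v (2 * m)⟩

lemma Reach.intCast_apply {v w : L g} (h : Reach C v w) (q : Fin g × Bool) :
    (w q : ZMod 2) = v q := by
  obtain ⟨n, hn, rfl⟩ := h
  exact intCast_apply_of_mem_ker (sqTransvGroup_le_SpTwo hn).2 v q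

lemma Reach.primitive {v w : L g} (h : Reach C v w) (hv : Primitive v) : Primitive w := by
  obtain ⟨n, -, rfl⟩ := h
  exact hv.map n

/-- Three moves, along `c + u`, `c` and `u`: the contributions along `u` cancel, and the one
along `c` is `2 s (omg u v)² = 2 s`. -/
lemma reach_add_two_mul_smul {c u : L g} (hc : C c) (hcu : C (c + u)) (hu : C u)
    (h : omg c u = 0) {v : L g} (hv : IsUnit (omg u v)) (s : ℤ) :
    Reach C v (v + (2 * s) • c) := by
  set α := omg u v
  set t := omg c v
  have hα : α * α = 1 := Int.isUnit_mul_self hv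
  have hcu' : omg u c = 0 := by rw [omg_comm, h, neg_zero]
  have h₁ := reach_add_smul hcu (α * s) v
  set v₁ := v + (2 * (α * s) * omg (c + u) v) • (c + u)
  have ht₁ : omg c v₁ = t := by
    simp only [v₁, omg_add_right, omg_smul_right, omg_self, h]; ring
  have h₂ := reach_add_smul hc (-(α * s)) v₁
  set v₂ := v₁ + (2 * -(α * s) * omg c v₁) • c
  have hα₂ : omg u v₂ = α := by
    simp only [v₂, v₁, omg_add_right, omg_smul_right, omg_self, hcu']; ring
  have h₃ := reach_add_smul hu (-(s * (t + α))) v₂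
  convert h₁.trans (h₂.trans h₃) using 1
  rw [hα₂]
  simp only [v₂, ht₁]
  simp only [v₁, omg_add_left]
  linear_combination (norm := module) (-(2 * s) * hα) • c

variable {x y : L g}

/-- The Euclidean algorithm on the pair `(omg x v, omg y v)`: a move along `x` or `y` adds an even
multiple of one entry to the other. -/
lemma exists_reach_omg_eq_zero (hx : C x) (hy : C y) (hxy : omg x y = 1) (v : L g)
    (hodd : Odd (omg y v)) (heven : Even (omg x v)) :
    ∃ v', Reach C v v' ∧ omg x v' = 0 ∧ omg y v' ∣ omg y v ∧ omg y v' ∣ omg x v := by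
  have hyx : omg y x = -1 := by rw [omg_comm, hxy]
  induction h : (omg x v).natAbs using Nat.strong_induction_on generalizing v with
  | _ N ih =>
  subst h
  by_cases hp : omg x v = 0
  · exact ⟨v, Reach.refl v, hp, dvd_rfl, hp ▸ dvd_zero _⟩
  obtain ⟨m, hm⟩ := exists_natAbs_add_two_mul_lt hp (hodd.add_even heven)
  have h₁ := reach_add_smul hx (-m) v
  set v₁ := v + (2 * -m * omg x v) • x
  have hx₁ : omg x v₁ = omg x v := by
    simp only [v₁, omg_add_right, omg_smul_right, omg_self]; ring
  have hy₁ : omg y v₁ = omg y v + 2 * m * omg x v := by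
    simp only [v₁, omg_add_right, omg_smul_right, hyx]; ring
  have hodd₁ : Odd (omg y v₁) :=
    hy₁ ▸ hodd.add_even (by rw [mul_assoc]; exact even_two_mul _)
  obtain ⟨m', hm'⟩ := exists_natAbs_add_two_mul_lt (by rintro h; simp [h] at hodd₁)
    (hx₁ ▸ heven.add_odd hodd₁ : Odd (omg x v₁ + omg y v₁))
  have h₂ := reach_add_smul hy m' v₁
  set v₂ := v₁ + (2 * m' * omg y v₁) • y
  have hx₂ : omg x v₂ = omg x v + 2 * m' * omg y v₁ := by
    simp only [v₂, omg_add_right, omg_smul_right, hxy, hx₁]; ring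
  have hy₂ : omg y v₂ = omg y v₁ := by
    simp only [v₂, omg_add_right, omg_smul_right, omg_self]; ring
  obtain ⟨v', h', hv', hdy, hdx⟩ := ih _ (by omega) v₂ (hy₂ ▸ hodd₁)
    (hx₂ ▸ heven.add (by rw [mul_assoc]; exact even_two_mul _)) rfl
  rw [hy₂] at hdy
  rw [hx₂] at hdx
  have hdp : omg y v' ∣ omg x v := by
    simpa using dvd_sub hdx (dvd_mul_of_dvd_right hdy (2 * m'))
  refine ⟨v', h₁.trans (h₂.trans h'), hv', ?_, hdp⟩
  simpa [hy₁] using dvd_sub hdy (dvd_mul_of_dvd_right hdp (2 * m))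

/-- One move along `z + y` makes `omg x v` equal to `2 (omg z v + omg y v)`; the Euclidean
algorithm then replaces `omg y v` by a divisor of it that also divides `omg z v`. -/
lemma exists_reach_natAbs_lt {z : L g} (hx : C x) (hy : C y) (hzy : C (z + y))
    (hxy : omg x y = 1) (hzx : omg z x = 0) (hzy' : omg z y = 0) (v : L g) (hv : omg x v = 0)
    (hodd : Odd (omg y v)) (hndvd : ¬omg y v ∣ omg z v) :
    ∃ v', Reach C v v' ∧ omg x v' = 0 ∧ Odd (omg y v') ∧
      (omg y v').natAbs < (omg y v).natAbs := by
  have hxz : omg x z = 0 := by rw [omg_comm, hzx, neg_zero]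
  have hyz : omg y z = 0 := by rw [omg_comm, hzy', neg_zero]
  have h₁ := reach_add_smul hzy 1 v
  set v₁ := v + (2 * 1 * omg (z + y) v) • (z + y)
  have hx₁ : omg x v₁ = 2 * (omg z v + omg y v) := by
    simp only [v₁, omg_add_left, omg_add_right, omg_smul_right, hv, hxz, hxy]; ring
  have hy₁ : omg y v₁ = omg y v := by
    simp only [v₁, omg_add_right, omg_smul_right, hyz, omg_self]; ring
  obtain ⟨v', h', hv', hdy, hdx⟩ :=
    exists_reach_omg_eq_zero hx hy hxy v₁ (hy₁ ▸ hodd) (hx₁ ▸ even_two_mul _)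
  rw [hy₁] at hdy
  rw [hx₁] at hdx
  have hd : Odd (omg y v') := hodd.of_dvd_int hdy
  have hdz : omg y v' ∣ omg z v := by
    simpa using dvd_sub ((Int.isCoprime_two_right.mpr hd).dvd_of_dvd_mul_left hdx) hdy
  refine ⟨v', h₁.trans h', hv', hd, ?_⟩
  have hy0 : omg y v ≠ 0 := by rintro h; simp [h] at hodd
  refine lt_of_le_of_ne (Int.natAbs_le_of_dvd_ne_zero hdy hy0) fun heq => hndvd ?_
  exact (Int.natAbs_dvd_natAbs.mp (heq ▸ dvd_rfl)).trans hdz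

lemma reach_neg_self (hy : C y) (hxy' : C (x + y)) (hxy : omg x y = 1) : Reach C (-x) x := by
  have h₁ := reach_add_smul hxy' 1 (-x)
  have hω : omg (x + y) (-x) = 1 := by
    rw [omg_neg_right, omg_add_left, omg_self, omg_comm, hxy]; ring
  rw [hω] at h₁
  have h₂ := reach_add_smul hy 1 (-x + (2 * 1 * 1 : ℤ) • (x + y))
  have hω' : omg y (-x + (2 * 1 * 1 : ℤ) • (x + y)) = -1 := by
    simp only [omg_add_right, omg_neg_right, omg_smul_right, omg_self]
    rw [omg_comm, hxy]; ring
  rw [hω'] at h₂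
  convert h₁.trans h₂ using 1
  module

lemma reach_add_of_even {u v d : L g} (hu : C u) (hv : IsUnit (omg u v))
    (hC : ∀ q, d q ≠ 0 →
      C (Pi.single q 1) ∧ C (Pi.single q 1 + u) ∧ omg (Pi.single q 1) u = 0)
    (hd : ∀ q, Even (d q)) : Reach C v (v + d) := by
  rw [← Finset.univ_sum_single d]
  refine (Finset.sum_induction _
    (fun w => omg u w = 0 ∧ ∀ v, IsUnit (omg u v) → Reach C v (v + w)) ?_ ?_ ?_).2 v hv
  · rintro w₁ w₂ ⟨hw₁, h₁⟩ ⟨hw₂, h₂⟩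
    refine ⟨by rw [omg_add_right, hw₁, hw₂, add_zero], fun v hv => ?_⟩
    rw [← add_assoc]
    exact (h₁ v hv).trans (h₂ _ (by rwa [omg_add_right, hw₁, add_zero]))
  · exact ⟨omg_zero_right u, fun v _ => by simpa using Reach.refl v⟩
  · intro q _
    by_cases hq : d q = 0
    · exact ⟨by simp [hq, omg_zero_right], fun v _ => by simpa [hq] using Reach.refl v⟩
    obtain ⟨hq₁, hq₂, hq₃⟩ := hC q hq
    obtain ⟨s, hs⟩ := hd q
    have hsingle : Pi.single q (d q) = (2 * s) • (Pi.single q 1 : L g) := by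
      rw [← Pi.single_smul, smul_eq_mul, mul_one, hs, two_mul]
    rw [hsingle]
    refine ⟨by rw [omg_smul_right, omg_comm, hq₃]; ring, fun v hv => ?_⟩
    exact reach_add_two_mul_smul hq₁ hq₂ hu hq₃ hv s

end SquareTransvections

section Coordinates

variable {g : ℕ} {k : ℕ}

def VanishesBelow (k : ℕ) (v : L g) : Prop := ∀ p : Fin g × Bool, (p.1 : ℕ) < k → v p = 0

def Admissible (k : ℕ) (c : L g) : Prop := Primitive c ∧ VanishesBelow k c

def FixesBelow (k : ℕ) (φ : L g ≃ₗ[ℤ] L g) : Prop :=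
  ∀ p : Fin g × Bool, (p.1 : ℕ) < k → φ (Pi.single p 1) = Pi.single p 1

lemma admissible_single {p : Fin g × Bool} (hp : k ≤ p.1) : Admissible k (Pi.single p 1 : L g) :=
  ⟨primitive_of_apply_eq_one (Pi.single_eq_same p 1), fun q hq =>
    Pi.single_eq_of_ne (by rintro rfl; omega) 1⟩

lemma admissible_single_add {p q : Fin g × Bool} (hp : k ≤ p.1) (hq : k ≤ q.1)
    (hpq : p ≠ q) : Admissible k (Pi.single p 1 + Pi.single q 1 : L g) :=
  ⟨primitive_of_apply_eq_one (p := p) (by simp [hpq]), fun r hr => by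
    rw [Pi.add_apply, (admissible_single hp).2 r hr, (admissible_single hq).2 r hr, add_zero]⟩

lemma omg_single_of_ne {i j : Fin g} (h : i ≠ j) (b b' : Bool) :
    omg (Pi.single (i, b) 1) (Pi.single (j, b') 1) = 0 := by
  cases b <;> simp [omg_single_false, omg_single_true, Ne.symm h]

lemma omg_eq_zero_of_vanishesBelow {c : L g} (hc : VanishesBelow k c) {p : Fin g × Bool}
    (hp : (p.1 : ℕ) < k) : omg c (Pi.single p 1) = 0 := by
  obtain ⟨i, b⟩ := p
  rw [omg_comm]
  cases b
  · simp [omg_single_false, hc (i, true) hp]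
  · simp [omg_single_true, hc (i, false) hp]

lemma dvd_omg_single_not_iff {d : ℤ} (q : Fin g × Bool) (v : L g) :
    d ∣ omg (Pi.single (q.1, !q.2) 1) v ↔ d ∣ v q := by
  obtain ⟨i, b⟩ := q
  cases b <;> simp [omg_single_false, omg_single_true]

lemma fixesBelow_of_mem_sqTransvGroup {n : L g ≃ₗ[ℤ] L g}
    (hn : n ∈ sqTransvGroup (Admissible k)) : FixesBelow k n := fun _ hp =>
  apply_eq_of_mem_sqTransvGroup (fun _ hc => omg_eq_zero_of_vanishesBelow hc.2 hp) hn

lemma FixesBelow.mul {φ ψ : L g ≃ₗ[ℤ] L g} (hφ : FixesBelow k φ) (hψ : FixesBelow k ψ) :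
    FixesBelow k (φ * ψ) := fun p hp => by
  rw [LinearEquiv.mul_apply, hψ p hp, hφ p hp]

lemma FixesBelow.apply_vanishesBelow {φ : L g ≃ₗ[ℤ] L g} (hSp : φ ∈ Sp g)
    (hφ : FixesBelow k φ) {v : L g} (hv : VanishesBelow k v) : VanishesBelow k (φ v) :=
  fun p hp => by rw [apply_eq_of_fixes hSp (fun b => hφ (p.1, b) hp), hv p hp]

lemma Reach.vanishesBelow {v w : L g} (h : Reach (Admissible k) v w) (hv : VanishesBelow k v) :
    VanishesBelow k w := by
  obtain ⟨n, hn, rfl⟩ := h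
  exact (fixesBelow_of_mem_sqTransvGroup hn).apply_vanishesBelow
    (sqTransvGroup_le_SpTwo hn).1 hv

end Coordinates

section Orbits

variable {g : ℕ} {k : ℕ}

lemma exists_reach_isUnit (K : Fin g) (hK : k ≤ K) (v : L g) (hv : Primitive v)
    (hsupp : VanishesBelow k v) (hvt : v (K, true) = 0) (hvf : Odd (v (K, false))) :
    ∃ v', Reach (Admissible k) v v' ∧ v' (K, true) = 0 ∧ IsUnit (v' (K, false)) := by
  induction h : (v (K, false)).natAbs using Nat.strong_induction_on generalizing v with
  | _ N ih =>
  subst h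
  by_cases hunit : IsUnit (v (K, false))
  · exact ⟨v, Reach.refl v, hvt, hunit⟩
  have ha0 : v (K, false) ≠ 0 := by rintro h; simp [h] at hvf
  obtain ⟨q, hq⟩ := hv.exists_not_dvd ha0 hunit
  have hqK : q.1 ≠ K := by
    obtain ⟨i, b⟩ := q
    rintro rfl
    cases b
    · exact hq dvd_rfl
    · exact hq (hvt ▸ dvd_zero _)
  have hqk : k ≤ q.1 := by
    by_contra! hlt
    exact hq (hsupp q hlt ▸ dvd_zero _)
  obtain ⟨v', h', hv't, hv'f, hlt⟩ := exists_reach_natAbs_lt (v := v)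
    (z := Pi.single (q.1, !q.2) 1) (admissible_single (p := (K, false)) hK)
    (admissible_single (p := (K, true)) hK)
    (admissible_single_add hqk hK (by simp [hqK])) (omg_single_single K)
    (omg_single_of_ne hqK _ _) (omg_single_of_ne hqK _ _)
    (by rw [omg_single_false, hvt]) (by rw [omg_single_true]; exact hvf.neg)
    (by rw [dvd_omg_single_not_iff, omg_single_true, neg_dvd]; exact hq)
  rw [omg_single_false] at hv't
  rw [omg_single_true, Int.natAbs_neg, omg_single_true, Int.natAbs_neg] at hlt
  rw [omg_single_true, odd_neg] at hv'f
  obtain ⟨v'', h'', hv''⟩ :=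
    ih _ hlt v' (h'.primitive hv) (h'.vanishesBelow hsupp) hv't hv'f rfl
  exact ⟨v'', h'.trans h'', hv''⟩

lemma odd_of_intCast_eq {v : L g} {K : Fin g} {b : Bool}
    (hpar : ∀ q, (v q : ZMod 2) = (Pi.single (K, b) 1 : L g) q) : Odd (v (K, b)) := by
  simpa [ZMod.intCast_eq_one_iff_odd] using hpar (K, b)

lemma even_of_intCast_eq {v : L g} {p q : Fin g × Bool}
    (hpar : ∀ q, (v q : ZMod 2) = (Pi.single p 1 : L g) q) (hq : q ≠ p) : Even (v q) := by
  simpa [ZMod.intCast_eq_zero_iff_even, hq] using hpar q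

lemma reach_restrict_pair {C : L g → Prop} (K : Fin g) {u v : L g} (hu : C u)
    (hv : IsUnit (omg u v)) (hsupp : VanishesBelow k v)
    (hC : ∀ q : Fin g × Bool, q.1 ≠ K → k ≤ q.1 →
      C (Pi.single q 1) ∧ C (Pi.single q 1 + u) ∧ omg (Pi.single q 1) u = 0)
    (heven : ∀ q : Fin g × Bool, q.1 ≠ K → Even (v q)) :
    Reach C v (fun q => if q.1 = K then v q else 0) := by
  convert reach_add_of_even (d := fun q => if q.1 = K then 0 else -v q) hu hv (fun q hq => ?_)
    (fun q => ?_) using 1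
  · funext q
    by_cases hqK : q.1 = K <;> simp [hqK]
  · have hqK : q.1 ≠ K := by rintro h; simp [h] at hq
    refine hC q hqK ?_
    by_contra! hlt
    simp [hqK, hsupp q hlt] at hq
  · by_cases hqK : q.1 = K
    · simp [hqK]
    · simpa [hqK] using (heven q hqK).neg

lemma reach_single_false (K : Fin g) (hK : k ≤ K) (v : L g) (hv : Primitive v)
    (hsupp : VanishesBelow k v) (hpar : ∀ q, (v q : ZMod 2) = (Pi.single (K, false) 1 : L g) q) :
    Reach (Admissible k) v (Pi.single (K, false) 1) := by
  have hx := admissible_single (p := (K, false)) hK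
  have hy := admissible_single (p := (K, true)) hK
  obtain ⟨v₁, h₁, hv₁t, hv₁f, -⟩ := exists_reach_omg_eq_zero hx hy (omg_single_single K)
    v (by rw [omg_single_true]; exact (odd_of_intCast_eq hpar).neg)
    (by rw [omg_single_false]; exact even_of_intCast_eq hpar (by simp))
  rw [omg_single_false] at hv₁t
  simp only [omg_single_true, neg_dvd, dvd_neg] at hv₁f
  obtain ⟨v₂, h₂, hv₂t, hv₂f⟩ := exists_reach_isUnit K hK v₁ (h₁.primitive hv)
    (h₁.vanishesBelow hsupp) hv₁t ((odd_of_intCast_eq hpar).of_dvd_int hv₁f)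
  have h₁₂ := h₁.trans h₂
  have h₃ := reach_restrict_pair K hy (by rwa [omg_single_true, IsUnit.neg_iff])
    (h₁₂.vanishesBelow hsupp)
    (fun q hqK hqk => ⟨admissible_single hqk,
      admissible_single_add hqk hK (by simp [Prod.ext_iff, hqK]), omg_single_of_ne hqK _ _⟩)
    (fun q hqK => even_of_intCast_eq (fun q => (h₁₂.intCast_apply q).trans (hpar q))
      (by simp [Prod.ext_iff, hqK]))
  have hv₂ : (fun q => if q.1 = K then v₂ q else 0) =
      v₂ (K, false) • Pi.single (K, false) 1 := by
    funext ⟨i, b⟩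
    by_cases hi : i = K
    · subst hi
      cases b <;> simp [hv₂t]
    · simp [hi]
  rw [hv₂] at h₃
  rcases Int.isUnit_iff.mp hv₂f with h | h
  · simpa [h] using h₁₂.trans h₃
  · rw [h, neg_one_smul] at h₃
    exact (h₁₂.trans h₃).trans (reach_neg_self hy (admissible_single_add hK hK (by simp))
      (omg_single_single K))

lemma reach_single_true (K : Fin g) (hK : k ≤ K) (w : L g) (hsupp : VanishesBelow k w)
    (hwt : w (K, true) = 1) (hpar : ∀ q, (w q : ZMod 2) = (Pi.single (K, true) 1 : L g) q) :
    Reach (fun c => Admissible k c ∧ omg c (Pi.single (K, false) 1) = 0) w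
      (Pi.single (K, true) 1) := by
  set C : L g → Prop := fun c => Admissible k c ∧ omg c (Pi.single (K, false) 1) = 0
  have hx : C (Pi.single (K, false) 1) := ⟨admissible_single hK, omg_self _⟩
  have h₁ := reach_restrict_pair K hx (by rw [omg_single_false, hwt]; exact isUnit_one) hsupp
    (fun q hqK hqk => by
      have hq : omg (Pi.single q 1) (Pi.single (K, false) 1) = 0 := omg_single_of_ne hqK _ _
      exact ⟨⟨admissible_single hqk, hq⟩,
        ⟨admissible_single_add hqk hK (by simp [Prod.ext_iff, hqK]),
          by rw [omg_add_left, hq, omg_self, add_zero]⟩, hq⟩)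
    (fun q hqK => even_of_intCast_eq hpar (by simp [Prod.ext_iff, hqK]))
  obtain ⟨s, hs⟩ := even_of_intCast_eq hpar (q := (K, false)) (by simp)
  have h₂ := reach_add_smul hx (-s) (fun q => if q.1 = K then w q else 0)
  convert h₁.trans h₂ using 1
  rw [omg_single_false]
  funext ⟨i, b⟩
  by_cases hi : i = K
  · subst hi
    cases b <;> simp [hwt, hs]
    ring
  · simp [hi]

end Orbits

section Generation

variable {g : ℕ}

lemma exists_fixesBelow_succ (K : Fin g) {φ : L g ≃ₗ[ℤ] L g} (hφ : φ ∈ SpTwo g)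
    (hfix : FixesBelow K φ) :
    ∃ n ∈ sqTransvGroup (Admissible K), FixesBelow (K + 1) (n * φ) := by
  have hxK : VanishesBelow K (Pi.single (K, false) 1 : L g) :=
    (admissible_single (p := (K, false)) le_rfl).2
  have hyK : VanishesBelow K (Pi.single (K, true) 1 : L g) :=
    (admissible_single (p := (K, true)) le_rfl).2
  obtain ⟨n₁, hn₁, hv⟩ := reach_single_false K le_rfl _
    ((primitive_of_apply_eq_one (Pi.single_eq_same _ 1)).map φ)
    (hfix.apply_vanishesBelow hφ.1 hxK) (intCast_apply_of_mem_ker hφ.2 _)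
  have hφ₂ : n₁ * φ ∈ SpTwo g := mul_mem (sqTransvGroup_le_SpTwo hn₁) hφ
  have hfix₂ : FixesBelow K (n₁ * φ) := (fixesBelow_of_mem_sqTransvGroup hn₁).mul hfix
  have hwt : (n₁ * φ) (Pi.single (K, true) 1) (K, true) = 1 := by
    have := hφ₂.1 (Pi.single (K, false) 1) (Pi.single (K, true) 1)
    rwa [LinearEquiv.mul_apply (f := n₁), hv, omg_single_single, omg_single_false] at this
  obtain ⟨n₂, hn₂, hw⟩ := reach_single_true K le_rfl _
    (hfix₂.apply_vanishesBelow hφ₂.1 hyK) hwt (intCast_apply_of_mem_ker hφ₂.2 _)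
  have hn₂' : n₂ ∈ sqTransvGroup (Admissible K) := sqTransvGroup_mono (fun _ hc => hc.1) hn₂
  have hn₂x : n₂ (Pi.single (K, false) 1) = Pi.single (K, false) 1 :=
    apply_eq_of_mem_sqTransvGroup (fun _ hc => hc.2) hn₂
  refine ⟨n₂ * n₁, mul_mem hn₂' hn₁, fun ⟨i, b⟩ hi => ?_⟩
  rcases Nat.lt_succ_iff_lt_or_eq.mp hi with hi | hi
  · rw [mul_assoc]
    exact ((fixesBelow_of_mem_sqTransvGroup hn₂').mul hfix₂) (i, b) hi
  obtain rfl : i = K := Fin.ext hi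
  cases b
  · rw [mul_assoc, LinearEquiv.mul_apply, LinearEquiv.mul_apply (f := n₁), hv, hn₂x]
  · rw [mul_assoc, LinearEquiv.mul_apply, hw]

lemma fixesBelow_eq_one {φ : L g ≃ₗ[ℤ] L g} (hφ : FixesBelow g φ) : φ = 1 :=
  (Pi.basisFun ℤ (Fin g × Bool)).ext' fun p => by
    simpa using hφ p p.1.isLt

lemma mem_sqTransvGroup_of_fixesBelow {k : ℕ} (hk : k ≤ g) {φ : L g ≃ₗ[ℤ] L g}
    (hφ : φ ∈ SpTwo g) (hfix : FixesBelow k φ) : φ ∈ sqTransvGroup Primitive := by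
  induction hk using Nat.decreasingInduction generalizing φ with
  | self => exact fixesBelow_eq_one hfix ▸ one_mem _
  | of_succ k hk ih =>
    obtain ⟨n, hn, hnφ⟩ := exists_fixesBelow_succ ⟨k, hk⟩ hφ hfix
    have hn' : n ∈ sqTransvGroup Primitive := sqTransvGroup_mono (fun _ hc => hc.1) hn
    simpa using mul_mem (inv_mem hn') (ih (mul_mem (sqTransvGroup_le_SpTwo hn) hφ) hnφ)

end Generation

theorem statement3_general (g : ℕ) :
    SpTwo g =
      Subgroup.closure {φ : L g ≃ₗ[ℤ] L g | ∃ a : L g, Primitive a ∧ φ = (T a) ^ 2} :=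
  le_antisymm (fun _ hφ => mem_sqTransvGroup_of_fixesBelow (Nat.zero_le g) hφ
    fun _ hp => absurd hp (Nat.not_lt_zero _)) sqTransvGroup_le_SpTwo

/-- (Johnson) For `g ≥ 3`, `Sp^{(2)}(2g)` is generated by the square
transvections `T_a²` over all primitive `a ∈ ℤ^{2g}`. -/
theorem statement3 (g : ℕ) (hg : 3 ≤ g) :
    SpTwo g =
      Subgroup.closure {φ : L g ≃ₗ[ℤ] L g | ∃ a : L g, Primitive a ∧ φ = (T a) ^ 2} :=
  statement3_general g

end Paper
end
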